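/- arXiv:1811.00991 — 5 statements merged into one kernel-verified Lean document; each statement's English description precedes it below -/
import Mathlib

section
/- For every integer k ≥ 4, the satisfiability threshold d*(k) is strictly less than k. -/
noncomputable def binEnt (p : ℝ) : ℝ := -p * Real.log p - (1 - p) * Real.log (1 - p)

noncomputable def dstar (k : ℕ) : ℝ :=
  (k : ℝ) * binEnt (2 / k) /
    ((k : ℝ) * binEnt (2 / k) + Real.log (2 / ((k : ℝ) * ((k : ℝ) - 1))))

private lemma log_gap {a b : ℝ} (hb : 0 < b) (hba : b ≤ a) :
    (a - b) / a ≤ Real.log a - Real.log b := by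
  have ha : 0 < a := lt_of_lt_of_le hb hba
  have h := Real.log_le_sub_one_of_pos (div_pos hb ha)
  rw [Real.log_div hb.ne' ha.ne'] at h
  have : (a - b) / a = 1 - b / a := by field_simp
  linarith

private lemma key (x P Q L T : ℝ) (hx : 4 ≤ x)
    (h1 : 2 * x + 1 ≤ P * x ^ 2) (h2 : 1 ≤ Q * x)
    (h3 : 2.7182818 * L ≤ x) (h4 : T ≤ 0.6931472) :
    0 < (x - 1) * (x - 2) * P + Q * x - 2 * L - (x - 2) * T := by
  have hx0 : (0:ℝ) < x := by linarith
  have hx2 : (0:ℝ) < x ^ 2 := by positivity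
  have hcoef : (0:ℝ) ≤ (x - 1) * (x - 2) := by nlinarith
  have h1' : (x - 1) * (x - 2) * (2 * x + 1) ≤ (x - 1) * (x - 2) * (P * x ^ 2) :=
    mul_le_mul_of_nonneg_left h1 hcoef
  have h2' : x ^ 2 ≤ Q * x * x ^ 2 := by nlinarith
  have h3' : 2.7182818 * L * x ^ 2 ≤ x * x ^ 2 :=
    mul_le_mul_of_nonneg_right h3 hx2.le
  have hcoef2 : (0:ℝ) ≤ (x - 2) * x ^ 2 := by nlinarith
  have h4' : T * ((x - 2) * x ^ 2) ≤ 0.6931472 * ((x - 2) * x ^ 2) :=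
    mul_le_mul_of_nonneg_right h4 hcoef2
  have hG : 0 < ((x - 1) * (x - 2) * P + Q * x - 2 * L - (x - 2) * T) * x ^ 2 := by
    nlinarith [h1', h2', h3', h4', sq_nonneg (x - 4),
      mul_nonneg (mul_nonneg (by linarith : (0:ℝ) ≤ x - 4) (by linarith : (0:ℝ) ≤ x - 4))
        (by linarith : (0:ℝ) ≤ x - 4)]
  by_contra h
  push_neg at h
  linarith [mul_nonpos_of_nonpos_of_nonneg h hx2.le]

theorem stmt_2 (k : ℕ) (hk : 4 ≤ k) : dstar k < k := by
  have hx : (4:ℝ) ≤ (k:ℝ) := by exact_mod_cast hk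
  set x : ℝ := (k : ℝ) with hxdef
  have hx0 : (0:ℝ) < x := by linarith
  have hx1 : (0:ℝ) < x - 1 := by linarith
  have hx2 : (0:ℝ) < x - 2 := by linarith
  set L : ℝ := Real.log x with hL
  set M : ℝ := Real.log (x - 1) with hM
  set N : ℝ := Real.log (x - 2) with hN
  set T : ℝ := Real.log 2 with hT
  have h12 : (1:ℝ) - 2 / x = (x - 2) / x := by field_simp
  have hH : binEnt (2 / x) = (2 / x) * (L - T) + ((x - 2) / x) * (L - N) := by
    rw [binEnt, h12, Real.log_div (by norm_num) hx0.ne', Real.log_div hx2.ne' hx0.ne']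
    ring
  set H : ℝ := binEnt (2 / x) with hHdef
  have hB : Real.log (2 / (x * (x - 1))) = T - L - M := by
    rw [Real.log_div (by norm_num) (by positivity), Real.log_mul hx0.ne' hx1.ne']
    ring
  have gap1 : 1 / x ≤ L - M := by
    have h := log_gap hx1 (by linarith : x - 1 ≤ x)
    have e : (x - (x - 1)) / x = 1 / x := by ring
    rw [e] at h; exact h
  have gap2 : 1 / (x - 1) ≤ M - N := by
    have h := log_gap hx2 (by linarith : x - 2 ≤ x - 1)
    have e : ((x - 1) - (x - 2)) / (x - 1) = 1 / (x - 1) := by ring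
    rw [e] at h; exact h
  have h2 : 1 ≤ (L - M) * x := by
    have h := mul_le_mul_of_nonneg_right gap1 hx0.le
    rw [one_div, inv_mul_cancel₀ hx0.ne'] at h
    linarith
  have h1 : 2 * x + 1 ≤ (L - N) * x ^ 2 := by
    have hs : 1 / x + 1 / (x - 1) ≤ L - N := by linarith
    have h := mul_le_mul_of_nonneg_right hs (by positivity : (0:ℝ) ≤ x ^ 2)
    have e : (1 / x + 1 / (x - 1)) * x ^ 2 = x + x ^ 2 / (x - 1) := by
      field_simp
    rw [e] at h
    have e2 : x + 1 ≤ x ^ 2 / (x - 1) := by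
      rw [le_div_iff₀ hx1]; nlinarith
    linarith
  have hL0 : (0:ℝ) ≤ L := Real.log_nonneg (by linarith)
  have h3 : 2.7182818 * L ≤ x := by
    have hexp : L ≤ Real.exp (L - 1) := by
      have := Real.add_one_le_exp (L - 1); linarith
    have h5 : Real.exp 1 * L ≤ Real.exp 1 * Real.exp (L - 1) :=
      mul_le_mul_of_nonneg_left hexp (Real.exp_pos 1).le
    have h6 : Real.exp 1 * Real.exp (L - 1) = x := by
      rw [← Real.exp_add, show (1:ℝ) + (L - 1) = L by ring, hL, Real.exp_log hx0]
    have he : (2.7182818:ℝ) ≤ Real.exp 1 := by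
      have := Real.exp_one_gt_d9; linarith
    nlinarith [mul_le_mul_of_nonneg_right he hL0]
  have h4 : T ≤ 0.6931472 := by
    have := Real.log_two_lt_d9; rw [hT]; linarith
  have hG := key x (L - N) (L - M) L T hx h1 h2 h3 h4
  have hCx : ((x - 1) * H + (T - L - M)) * x
      = (x - 1) * (x - 2) * (L - N) + (L - M) * x - 2 * L - (x - 2) * T := by
    rw [hH]; field_simp; ring
  have hC : 0 < (x - 1) * H + (T - L - M) := by
    by_contra h
    push_neg at h
    have hm := mul_nonpos_of_nonpos_of_nonneg h hx0.le
    rw [hCx] at hm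
    linarith
  have hLT : T ≤ L := by
    rw [hT, hL]; exact Real.log_le_log (by norm_num) (by linarith)
  have hLN : N ≤ L := by
    rw [hN, hL]; exact Real.log_le_log hx2 (by linarith)
  have hH0 : 0 ≤ H := by
    rw [hH]
    have t1 : 0 ≤ (2 / x) * (L - T) := mul_nonneg (by positivity) (by linarith)
    have t2 : 0 ≤ ((x - 2) / x) * (L - N) := mul_nonneg (by positivity) (by linarith)
    linarith
  have hD : 0 < x * H + (T - L - M) := by
    have e : x * H + (T - L - M) = ((x - 1) * H + (T - L - M)) + H := by ring
    rw [e]; linarith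
  unfold dstar
  rw [← hxdef, ← hHdef, hB, div_lt_iff₀ hD]
  have e : x * (x * H + (T - L - M)) = x * ((x - 1) * H + (T - L - M)) + x * H := by ring
  linarith [mul_pos hx0 hC, e]
end

section
/- For every integer k ≥ 4, the threshold d*(k) is not an integer. -/
/-!
Write `X = dstarBase k`. The denominator of `dstar k` is `log X` and its numerator is
`log X + log (k (k - 1) / 2)`. Bernoulli's inequality gives `X > 1`, so an integer value `n`
forces `n ≥ 1` and `X ^ (n - 1) = k (k - 1) / 2`. Clearing denominators, `k - 1` divides
`2 k ^ ((k - 1) (n - 1))`; being coprime to `k`, it divides `2`, which fails for `k ≥ 4`.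
-/

open Real

lemma mul_binEnt_two_div {x : ℝ} (hx : 2 < x) :
    x * binEnt (2 / x) = x * log x - 2 * log 2 - (x - 2) * log (x - 2) := by
  have hx0 : x ≠ 0 := by linarith
  have hx2 : x - 2 ≠ 0 := by linarith
  rw [binEnt, show 1 - 2 / x = (x - 2) / x by field_simp, log_div two_ne_zero hx0,
    log_div hx2 hx0]
  field_simp
  ring

noncomputable def dstarBase (k : ℕ) : ℝ :=
  (k : ℝ) ^ (k - 1) / (2 * ((k : ℝ) - 2) ^ (k - 2) * ((k : ℝ) - 1))

lemma dstar_eq {k : ℕ} (hk : 3 ≤ k) :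
    dstar k = (log (dstarBase k) + log (k * (k - 1) / 2)) / log (dstarBase k) := by
  have hK : (3 : ℝ) ≤ k := by exact_mod_cast hk
  have hK0 : (k : ℝ) ≠ 0 := by linarith
  have hK1 : (k : ℝ) - 1 ≠ 0 := by linarith
  have hK2 : (k : ℝ) - 2 ≠ 0 := by linarith
  have hlogBase : log (dstarBase k) =
      (k - 1) * log k - log 2 - (k - 2) * log (k - 2) - log (k - 1) := by
    rw [dstarBase, log_div (by positivity) (by positivity), log_mul (by positivity) hK1,
      log_mul two_ne_zero (by positivity), log_pow, log_pow]
    push_cast [Nat.cast_sub (by omega : 1 ≤ k), Nat.cast_sub (by omega : 2 ≤ k)]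
    ring
  rw [dstar, mul_binEnt_two_div (by linarith), hlogBase, log_div (by positivity) two_ne_zero,
    log_div two_ne_zero (by positivity), log_mul hK0 hK1]
  ring_nf

lemma three_mul_pow_self_le_add_two_pow {n : ℕ} (hn : 1 ≤ n) : 3 * n ^ n ≤ (n + 2) ^ n := by
  have hn' : (0 : ℝ) < n := by exact_mod_cast hn
  have hbern := one_add_mul_le_pow (a := 2 / (n : ℝ)) (by linarith [div_pos two_pos hn']) n
  rw [mul_div_cancel₀ _ hn'.ne', show 1 + 2 / (n : ℝ) = (n + 2) / n by field_simp, div_pow,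
    le_div_iff₀ (by positivity)] at hbern
  exact_mod_cast (by linarith : (3 : ℝ) * n ^ n ≤ (n + 2) ^ n)

lemma one_lt_dstarBase {k : ℕ} (hk : 3 ≤ k) : 1 < dstarBase k := by
  have hK : (3 : ℝ) ≤ k := by exact_mod_cast hk
  have hbern : 3 * ((k : ℝ) - 2) ^ (k - 2) ≤ (k : ℝ) ^ (k - 2) := by
    have h := three_mul_pow_self_le_add_two_pow (n := k - 2) (by omega)
    rw [Nat.sub_add_cancel (by omega)] at h
    have h' : ((3 * (k - 2) ^ (k - 2) : ℕ) : ℝ) ≤ ((k ^ (k - 2) : ℕ) : ℝ) := by exact_mod_cast h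
    push_cast [Nat.cast_sub (by omega : 2 ≤ k)] at h'
    exact h'
  have hpow : (k : ℝ) ^ (k - 1) = k * k ^ (k - 2) := by
    rw [← pow_succ']; congr 1; omega
  have hpos : 0 < ((k : ℝ) - 2) ^ (k - 2) := pow_pos (by linarith) _
  rw [dstarBase, one_lt_div (by nlinarith), hpow]
  nlinarith

lemma le_three_of_sub_one_dvd {k a : ℕ} (h : k - 1 ∣ 2 * k ^ a) : k ≤ 3 := by
  rcases Nat.eq_zero_or_pos k with rfl | hk
  · omega
  have hcop : Nat.Coprime (k - 1) (k ^ a) :=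
    Nat.Coprime.pow_right a ((Nat.coprime_self_sub_left hk).mpr (Nat.coprime_one_left k))
  have := Nat.le_of_dvd two_pos (hcop.dvd_of_dvd_mul_right h)
  omega

lemma dstarBase_pow_ne {k : ℕ} (hk : 4 ≤ k) (m : ℕ) : dstarBase k ^ m ≠ k * (k - 1) / 2 := by
  intro h
  have hK : (4 : ℝ) ≤ k := by exact_mod_cast hk
  have hreal : ((k : ℝ) ^ (k - 1)) ^ m * 2 =
      k * (k - 1) * (2 * ((k : ℝ) - 2) ^ (k - 2) * (k - 1)) ^ m := by
    have hden : 2 * ((k : ℝ) - 2) ^ (k - 2) * (k - 1) ≠ 0 :=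
      mul_ne_zero (mul_ne_zero two_ne_zero (pow_ne_zero _ (by linarith))) (by linarith)
    rw [dstarBase, div_pow, div_eq_div_iff (pow_ne_zero _ hden) two_ne_zero] at h
    linarith
  have hnat : (k ^ (k - 1)) ^ m * 2 = k * (k - 1) * (2 * (k - 2) ^ (k - 2) * (k - 1)) ^ m := by
    apply Nat.cast_injective (R := ℝ)
    push_cast [Nat.cast_sub (by omega : 1 ≤ k), Nat.cast_sub (by omega : 2 ≤ k)]
    exact hreal
  have hdvd : k - 1 ∣ 2 * k ^ ((k - 1) * m) := by
    rw [pow_mul, mul_comm, hnat]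
    exact dvd_mul_of_dvd_left (dvd_mul_left _ _) _
  have := le_three_of_sub_one_dvd hdvd
  omega

theorem stmt_3 (k : ℕ) (hk : 4 ≤ k) : ¬ ∃ n : ℤ, dstar k = (n : ℝ) := by
  rintro ⟨n, hn⟩
  have hK : (4 : ℝ) ≤ k := by exact_mod_cast hk
  have hX : 1 < dstarBase k := one_lt_dstarBase (by omega)
  have hc : 0 < log (dstarBase k) := log_pos hX
  have hb : 0 < log ((k : ℝ) * (k - 1) / 2) := log_pos (by nlinarith)
  rw [dstar_eq (by omega), div_eq_iff hc.ne'] at hn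
  have hrel : log ((k : ℝ) * (k - 1) / 2) = ((n - 1 : ℤ) : ℝ) * log (dstarBase k) := by
    push_cast; linarith
  obtain ⟨m, hm⟩ : ∃ m : ℕ, n - 1 = m := by
    refine Int.eq_ofNat_of_zero_le (le_of_lt ?_)
    exact_mod_cast pos_of_mul_pos_left (hrel ▸ hb) hc.le
  rw [hm, Int.cast_natCast, ← log_pow] at hrel
  have hpos : (0 : ℝ) < k * (k - 1) / 2 := by nlinarith
  exact dstarBase_pow_ne hk m (log_injOn_pos (pow_pos (zero_lt_one.trans hX) m) hpos hrel.symm)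
end

section
/- Define g(x) = x(x-3)·ln(x) - (x-2)·ln(2) - (x-1)(x-2)·ln(x-2) for real x ≥ 3. Then g(x) ≥ 0 for all real x ≥ 4. -/
/-!
Since x(x-3) = (x-1)(x-2) - 2, the derivative of g is (2x-3) log(x/(x-2)) - 2 - log 2.
The first term of the series log(1 + 1/a) = ∑ 2/(2k+1) (2a+1)^{-(2k+1)}, taken at a = (x-2)/2,
gives log(x/(x-2)) ≥ 2/(x-1), whence g' ≥ 2 - 2/(x-1) - log 2 > 0 for x ≥ 3.
So g is increasing on [3, ∞), and g(4) = 4 log 4 - 8 log 2 = 0.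
-/

open Real Set

theorem two_div_le_log_one_add_inv {a : ℝ} (ha : 0 < a) : 2 / (2 * a + 1) ≤ log (1 + a⁻¹) := by
  have h := le_hasSum (hasSum_log_one_add_inv ha) 0 fun k _ => by positivity
  simpa [div_eq_mul_inv] using h

noncomputable def g (x : ℝ) : ℝ :=
  x * (x - 3) * log x - (x - 2) * log 2 - (x - 1) * (x - 2) * log (x - 2)

theorem g_four : g 4 = 0 := by
  have h4 : log 4 = 2 * log 2 := by
    rw [show (4 : ℝ) = 2 ^ 2 by norm_num, log_pow]; push_cast; ring
  norm_num [g, h4]; ring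

theorem hasDerivAt_g {x : ℝ} (hx : 2 < x) :
    HasDerivAt g ((2 * x - 3) * (log x - log (x - 2)) - 2 - log 2) x := by
  have hx2 : x - 2 ≠ 0 := by linarith
  have hid := hasDerivAt_id' x
  have h := (((hid.mul (hid.sub_const 3)).mul (hasDerivAt_log (by linarith))).sub
    ((hid.sub_const 2).mul_const (log 2))).sub
    (((hid.sub_const 1).mul (hid.sub_const 2)).mul ((hid.sub_const 2).log hx2))
  exact h.congr_deriv (by simp only [Pi.mul_apply]; field_simp; ring)

theorem two_div_sub_one_le_log_sub_log {x : ℝ} (hx : 2 < x) :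
    2 / (x - 1) ≤ log x - log (x - 2) := by
  rw [← log_div (by linarith) (by linarith)]
  convert two_div_le_log_one_add_inv (a := (x - 2) / 2) (by linarith) using 2
  · ring
  · field_simp [show x - 2 ≠ 0 by linarith]; ring

theorem deriv_g_pos {x : ℝ} (hx : 3 ≤ x) :
    0 < (2 * x - 3) * (log x - log (x - 2)) - 2 - log 2 := by
  have hlog2 : log 2 < 1 := by linarith [log_two_lt_d9]
  have hx1 : 2 / (x - 1) ≤ 1 := by rw [div_le_one (by linarith)]; linarith
  rw [sub_sub, sub_pos]
  calc 2 + log 2 < 4 - 2 / (x - 1) := by linarith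
    _ = (2 * x - 3) * (2 / (x - 1)) := by field_simp [show x - 1 ≠ 0 by linarith]; ring
    _ ≤ (2 * x - 3) * (log x - log (x - 2)) :=
      mul_le_mul_of_nonneg_left (two_div_sub_one_le_log_sub_log (by linarith)) (by linarith)

theorem strictMonoOn_g : StrictMonoOn g (Ici 3) := by
  refine strictMonoOn_of_deriv_pos (convex_Ici 3) (fun x hx => ?_) fun x hx => ?_
  · exact (hasDerivAt_g (by linarith [mem_Ici.mp hx])).continuousAt.continuousWithinAt
  · rw [interior_Ici] at hx
    rw [(hasDerivAt_g (by linarith [mem_Ioi.mp hx])).deriv]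
    exact deriv_g_pos (le_of_lt hx)

theorem stmt_4 (x : ℝ) (hx : 4 ≤ x) :
    0 ≤ x * (x - 3) * Real.log x - (x - 2) * Real.log 2
      - (x - 1) * (x - 2) * Real.log (x - 2) := by
  have h := strictMonoOn_g.monotoneOn (by norm_num : (4 : ℝ) ∈ Ici 3)
    (mem_Ici.mpr (by linarith)) hx
  rwa [g_four] at h
end

section
/- For integer k ≥ 4 and real d with 0 < d < k, the 2×2 Hessian matrix H with entries H₁₁ = (d(k²-k+2) + k²(k-3))/((k-2)²(k-3)), H₁₂ = H₂₁ = -d(k-1)²/((k-2)(k-3)), H₂₂ = d(k-1)²/(2(k-3)) is positive definite, with det(H) = d·k·(k-1)²·(k-d)/(2(k-2)²(k-3)). -/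
/-!
A symmetric `2 × 2` matrix `!![a, b; b, c]` over an ordered field is positive definite as soon as
`0 < a` and `0 < a c - b²`, since `a (a x² + 2 b x y + c y²) = (a x + b y)² + (a c - b²) y²`.
For the Hessian the leading entry is visibly positive when `k > 3`, and the determinant factors as
`d k (k - 1)² (k - d) / (2 (k - 2)² (k - 3))`, which is positive for `0 < d < k`.
-/

theorem Matrix.posDef_fin_two_of {R : Type*} [Field R] [LinearOrder R] [IsStrictOrderedRing R]
    [StarRing R] [TrivialStar R] {a b c : R} (ha : 0 < a) (hdet : 0 < a * c - b * b) :
    (!![a, b; b, c]).PosDef := by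
  refine Matrix.posDef_iff_dotProduct_mulVec.mpr ⟨?_, fun x hx ↦ ?_⟩
  · ext i j
    fin_cases i <;> fin_cases j <;> simp
  simp only [star_trivial, dotProduct, Fin.sum_univ_two, Matrix.mulVec, Matrix.of_apply,
    Matrix.cons_val', Matrix.cons_val_zero, Matrix.cons_val_one, Matrix.empty_val',
    Matrix.cons_val_fin_one]
  refine pos_of_mul_pos_right ?_ ha.le
  have completed_square : a * (x 0 * (a * x 0 + b * x 1) + x 1 * (b * x 0 + c * x 1)) =
      (a * x 0 + b * x 1) ^ 2 + (a * c - b * b) * x 1 ^ 2 := by ring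
  rw [completed_square]
  rcases eq_or_ne (x 1) 0 with hy | hy
  · have hx0 : x 0 ≠ 0 := fun hx0 ↦ hx (funext fun i ↦ by fin_cases i <;> simp [hx0, hy])
    simpa [hy] using sq_pos_of_ne_zero (mul_ne_zero ha.ne' hx0)
  · exact add_pos_of_nonneg_of_pos (sq_nonneg _) (mul_pos hdet (sq_pos_of_ne_zero hy))

noncomputable def secondMomentHessian (d K : ℝ) : Matrix (Fin 2) (Fin 2) ℝ :=
  !![(d * (K ^ 2 - K + 2) + K ^ 2 * (K - 3)) / ((K - 2) ^ 2 * (K - 3)),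
     -d * (K - 1) ^ 2 / ((K - 2) * (K - 3));
     -d * (K - 1) ^ 2 / ((K - 2) * (K - 3)),
     d * (K - 1) ^ 2 / (2 * (K - 3))]

namespace secondMomentHessian

variable {d K : ℝ}

theorem det_eq (h2 : K ≠ 2) (h3 : K ≠ 3) :
    (secondMomentHessian d K).det =
      d * K * (K - 1) ^ 2 * (K - d) / (2 * (K - 2) ^ 2 * (K - 3)) := by
  rw [secondMomentHessian, Matrix.det_fin_two_of]
  have h2' : K - 2 ≠ 0 := sub_ne_zero.mpr h2
  have h3' : K - 3 ≠ 0 := sub_ne_zero.mpr h3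
  field_simp
  ring

theorem det_pos (hK : 3 < K) (hd : 0 < d) (hdK : d < K) : 0 < (secondMomentHessian d K).det := by
  rw [det_eq (by linarith) hK.ne']
  have : 0 < K - 3 := by linarith
  have : 0 < K - d := by linarith
  have : 0 < K - 1 := by linarith
  have : 0 < K - 2 := by linarith
  have : 0 < K := by linarith
  positivity

theorem posDef (hK : 3 < K) (hd : 0 < d) (hdK : d < K) : (secondMomentHessian d K).PosDef := by
  have h2 : 0 < K - 2 := by linarith
  have h3 : 0 < K - 3 := by linarith
  refine Matrix.posDef_fin_two_of (div_pos ?_ (by positivity)) ?_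
  · have : 0 < K ^ 2 - K + 2 := by nlinarith
    exact add_pos (mul_pos hd this) (mul_pos (by positivity) h3)
  · simpa only [secondMomentHessian, Matrix.det_fin_two_of] using det_pos hK hd hdK

end secondMomentHessian

theorem stmt_7 (k : ℕ) (hk : 4 ≤ k) (d : ℝ) (hd0 : 0 < d) (hdk : d < k) :
    let H : Matrix (Fin 2) (Fin 2) ℝ :=
      !![(d * ((k : ℝ) ^ 2 - k + 2) + (k : ℝ) ^ 2 * ((k : ℝ) - 3)) /
            (((k : ℝ) - 2) ^ 2 * ((k : ℝ) - 3)),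
         -d * ((k : ℝ) - 1) ^ 2 / (((k : ℝ) - 2) * ((k : ℝ) - 3));
         -d * ((k : ℝ) - 1) ^ 2 / (((k : ℝ) - 2) * ((k : ℝ) - 3)),
         d * ((k : ℝ) - 1) ^ 2 / (2 * ((k : ℝ) - 3))]
    H.PosDef ∧
      H.det = d * k * ((k : ℝ) - 1) ^ 2 * ((k : ℝ) - d) /
        (2 * ((k : ℝ) - 2) ^ 2 * ((k : ℝ) - 3)) := by
  have hk3 : (3 : ℝ) < k := by exact_mod_cast hk
  exact ⟨secondMomentHessian.posDef hk3 hd0 hdk,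
    secondMomentHessian.det_eq (by linarith) hk3.ne'⟩
end

section
/- Let f(w₁) = w₁·ln(2w₁) + (1-w₁)·ln(2(1-w₁)) - c·6(1/2 - w₁)² for a constant c > 0. Then f has at most one zero in the interval [0, 1/2). -/
/-!
Write `f = log 2 - binEntropy - c · 6 (1/2 - w)²`. Besides any zeros in `[0, 1/2)`, `f` vanishes
at `1/2` together with `f'`. Two zeros in `[0, 1/2)` would give, by Rolle's theorem, two zeros
of `f'` in `(0, 1/2)`, and with `f' (1/2) = 0` two zeros of `f'' w = 1 / (w (1 - w)) - 12 c`
in `(0, 1/2)`. But `f''` is strictly decreasing there, since `w (1 - w)` increases.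
-/

open Real Set

section Rolle

variable {g g' f f' f'' : ℝ → ℝ} {a b x y : ℝ}

theorem exists_deriv_zeros_of_three_zeros (hxy : x < y) (hyb : y < b)
    (hg : ContinuousOn g (Icc x b)) (hg' : ∀ t ∈ Ioo x b, HasDerivAt g (g' t) t)
    (hgx : g x = 0) (hgy : g y = 0) (hgb : g b = 0) :
    ∃ u v, x < u ∧ u < v ∧ v < b ∧ g' u = 0 ∧ g' v = 0 := by
  obtain ⟨u, hu, hu0⟩ := exists_hasDerivAt_eq_zero hxy (hg.mono (Icc_subset_Icc_right hyb.le))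
    (hgx.trans hgy.symm) fun t ht ↦ hg' t ⟨ht.1, ht.2.trans hyb⟩
  obtain ⟨v, hv, hv0⟩ := exists_hasDerivAt_eq_zero hyb (hg.mono (Icc_subset_Icc_left hxy.le))
    (hgy.trans hgb.symm) fun t ht ↦ hg' t ⟨hxy.trans ht.1, ht.2⟩
  exact ⟨u, v, hu.1, hu.2.trans hv.1, hv.2, hu0, hv0⟩

theorem subsingleton_zeros_of_injOn_deriv2 (hf : ContinuousOn f (Icc a b))
    (hf' : ∀ t ∈ Ioc a b, HasDerivAt f (f' t) t) (hf'' : ∀ t ∈ Ioc a b, HasDerivAt f' (f'' t) t)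
    (hinj : InjOn f'' (Ioo a b)) (hfb : f b = 0) (hf'b : f' b = 0) :
    {t ∈ Ico a b | f t = 0}.Subsingleton := by
  suffices ∀ x y, x ∈ Ico a b → y ∈ Ico a b → x < y → f x = 0 → f y = 0 → False by
    intro x ⟨hx, hfx⟩ y ⟨hy, hfy⟩
    by_contra hne
    rcases lt_or_gt_of_ne hne with h | h
    exacts [this x y hx hy h hfx hfy, this y x hy hx h hfy hfx]
  intro x y hx hy hxy hfx hfy
  obtain ⟨u, v, hxu, huv, hvb, hu, hv⟩ := exists_deriv_zeros_of_three_zeros hxy hy.2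
    (hf.mono (Icc_subset_Icc_left hx.1)) (fun t ht ↦ hf' t ⟨hx.1.trans_lt ht.1, ht.2.le⟩)
    hfx hfy hfb
  have hau : a < u := hx.1.trans_lt hxu
  obtain ⟨p, q, hup, hpq, hqb, hp, hq⟩ := exists_deriv_zeros_of_three_zeros huv hvb
    (fun t ht ↦ (hf'' t ⟨hau.trans_le ht.1, ht.2⟩).continuousAt.continuousWithinAt)
    (fun t ht ↦ hf'' t ⟨hau.trans ht.1, ht.2.le⟩) hu hv hf'b
  exact hpq.ne (hinj ⟨hau.trans hup, hpq.trans hqb⟩ ⟨hau.trans (hup.trans hpq), hqb⟩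
    (hp.trans hq.symm))

end Rolle

section DivergenceGap

variable (c : ℝ) {w : ℝ}

noncomputable def divergenceGap (w : ℝ) : ℝ :=
  log 2 - binEntropy w - c * (6 * (1 / 2 - w) ^ 2)

theorem continuous_divergenceGap : Continuous (divergenceGap c) := by
  unfold divergenceGap
  fun_prop

theorem hasDerivAt_divergenceGap (hw₀ : w ≠ 0) (hw₁ : w ≠ 1) :
    HasDerivAt (divergenceGap c) (log w - log (1 - w) + 12 * c * (1 / 2 - w)) w := by
  have h := ((hasDerivAt_binEntropy hw₀ hw₁).const_sub (log 2)).sub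
    ((((hasDerivAt_id w).const_sub (1 / 2)).pow 2).const_mul 6 |>.const_mul c)
  refine h.congr_deriv ?_
  simp only [id]
  ring

theorem hasDerivAt_deriv_divergenceGap (hw₀ : w ≠ 0) (hw₁ : w ≠ 1) :
    HasDerivAt (fun w ↦ log w - log (1 - w) + 12 * c * (1 / 2 - w))
      ((w * (1 - w))⁻¹ - 12 * c) w := by
  have h₁ : 1 - w ≠ 0 := sub_ne_zero.mpr (Ne.symm hw₁)
  have h := ((hasDerivAt_log hw₀).sub (((hasDerivAt_id w).const_sub 1).log h₁)).add
    (((hasDerivAt_id w).const_sub (1 / 2)).const_mul (12 * c))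
  refine h.congr_deriv ?_
  simp only [id]
  field_simp
  ring

theorem strictAntiOn_deriv2_divergenceGap :
    StrictAntiOn (fun w ↦ (w * (1 - w))⁻¹ - 12 * c) (Ioo 0 (1 / 2)) := by
  intro u hu v hv huv
  have hu' : 0 < u * (1 - u) := mul_pos hu.1 (by linarith [hu.2])
  have huv' : u * (1 - u) < v * (1 - v) := by nlinarith [hv.2]
  simpa using inv_strictAntiOn hu' (hu'.trans huv') huv'

theorem divergenceGap_half : divergenceGap c (1 / 2) = 0 := by
  simp [divergenceGap]

theorem divergenceGap_eq (hw₀ : 0 ≤ w) (hw₁ : w < 1) :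
    divergenceGap c w =
      w * log (2 * w) + (1 - w) * log (2 * (1 - w)) - c * (6 * (1 / 2 - w) ^ 2) := by
  have h₁ : log (2 * (1 - w)) = log 2 + log (1 - w) := log_mul two_ne_zero (by linarith)
  rcases hw₀.eq_or_lt with rfl | hw₀
  · simp [divergenceGap]
  · rw [log_mul two_ne_zero hw₀.ne', h₁, divergenceGap, binEntropy, log_inv, log_inv]
    ring

end DivergenceGap

theorem stmt_10_general (c : ℝ) :
    Set.Subsingleton {w₁ ∈ Set.Ico (0 : ℝ) (1 / 2) |
      w₁ * Real.log (2 * w₁) + (1 - w₁) * Real.log (2 * (1 - w₁))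
        - c * (6 * (1 / 2 - w₁) ^ 2) = 0} := by
  have h₀₁ {w : ℝ} (hw : w ∈ Ioc 0 (1 / 2)) : w ≠ 0 ∧ w ≠ 1 :=
    ⟨hw.1.ne', by linarith [hw.2]⟩
  have hzeros := subsingleton_zeros_of_injOn_deriv2 (continuous_divergenceGap c).continuousOn
    (fun w hw ↦ hasDerivAt_divergenceGap c (h₀₁ hw).1 (h₀₁ hw).2)
    (fun w hw ↦ hasDerivAt_deriv_divergenceGap c (h₀₁ hw).1 (h₀₁ hw).2)
    (strictAntiOn_deriv2_divergenceGap c).injOn (divergenceGap_half c) (by norm_num)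
  refine hzeros.anti ?_
  rintro w ⟨hw, hzero⟩
  exact ⟨hw, by rwa [divergenceGap_eq c hw.1 (by linarith [hw.2])]⟩

theorem stmt_10 (c : ℝ) (hc : 0 < c) :
    Set.Subsingleton {w₁ ∈ Set.Ico (0 : ℝ) (1 / 2) |
      w₁ * Real.log (2 * w₁) + (1 - w₁) * Real.log (2 * (1 - w₁))
        - c * (6 * (1 / 2 - w₁) ^ 2) = 0} :=
  stmt_10_general c
end
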